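/- Let q, γ ∈ (0,1) and let (S₁, S₂) have the joint pmf P(0,0) = 1−q, P(0,1) = 0, P(1,1) = qγ, P(1,0) = q(1−γ). Let (U, X) be a pair of finite-valued random variables with U arbitrary finite-valued and X ∈ {0,1}, independent of (S₁, S₂), and set Y₁ := S₁·X and Y₂ := S₂·X. Then: (i) I(X; Y₁ | U, S₁) = q · H(X | U), and (ii) I(U; Y₂ | S₂) = γq · ( H(X) − H(X | U) ), where H denotes base-2 Shannon entropy and H(·|·) conditional entropy of the finite joint distribution. -/
import Mathlib


open Finset

/-- The joint state pmf of Example 3: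
`P(0,0) = 1−q`, `P(0,1) = 0`, `P(1,1) = qγ`, `P(1,0) = q(1−γ)`. -/
noncomputable def PS12 (q γ : ℝ) (s₁ s₂ : Fin 2) : ℝ :=
  if s₁ = 0 then (if s₂ = 0 then 1 - q else 0)
  else (if s₂ = 0 then q * (1 - γ) else q * γ)

/-- Marginal pmf of `S₁`. -/
noncomputable def PS1 (q γ : ℝ) (s₁ : Fin 2) : ℝ := ∑ s₂, PS12 q γ s₁ s₂

/-- Marginal pmf of `S₂`. -/
noncomputable def PS2 (q γ : ℝ) (s₂ : Fin 2) : ℝ := ∑ s₁, PS12 q γ s₁ s₂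

/-- Conditional entropy `H(A|C)` of a finite joint pmf `p` of `(A, C)`, written
as the explicit sum `−Σ_{c,a} p(a,c) log₂ ( p(a,c) / Σ_{a'} p(a',c) )` with
base-2 logarithms (zero-probability terms contribute `0`). -/
noncomputable def condEnt {A C : Type} [Fintype A] [Fintype C]
    (p : A → C → ℝ) : ℝ :=
  - ∑ c, ∑ a, p a c * Real.logb 2 (p a c / ∑ a', p a' c)

lemma aux_scale (a b c : ℝ) (hc : c ≠ 0) :
    a * c * Real.logb 2 (a * c / (b * c)) = c * (a * Real.logb 2 (a / b)) := by
  rw [mul_div_mul_right _ _ hc]; ring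

lemma aux_scale' (a b c : ℝ) (hc : c ≠ 0) :
    c * a * Real.logb 2 (c * a / (c * b)) = c * (a * Real.logb 2 (a / b)) := by
  rw [mul_comm c a, mul_comm c b]; exact aux_scale a b c hc

lemma aux_scale1 (a c : ℝ) (hc : c ≠ 0) :
    a * c * Real.logb 2 (a * c / c) = c * (a * Real.logb 2 a) := by
  rw [mul_div_assoc, div_self hc, mul_one]; ring

lemma aux_scale1' (a c : ℝ) (hc : c ≠ 0) :
    c * a * Real.logb 2 (c * a / c) = c * (a * Real.logb 2 a) := by
  rw [mul_comm c a, mul_div_assoc, div_self hc, mul_one]; ring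

lemma aux_self (a : ℝ) : a * Real.logb 2 (a / a) = 0 := by
  rcases eq_or_ne a 0 with h | h
  · simp [h]
  · simp [div_self h]

lemma aux_pair (a b c : ℝ) (hc : c ≠ 0) :
    a * c * Real.logb 2 (a * c / (a * c + b * c)) +
      b * c * Real.logb 2 (b * c / (a * c + b * c))
    = c * (a * Real.logb 2 (a / (a + b)) + b * Real.logb 2 (b / (a + b))) := by
  have h1 : a * c + b * c = (a + b) * c := by ring
  rw [h1, aux_scale a (a+b) c hc, aux_scale b (a+b) c hc, mul_add]

lemma aux_sym (a b c : ℝ) (ha : 0 ≤ a) (hb : a ≤ b) (hc : a ≤ c) :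
    a * Real.logb 2 (a / b) - a * Real.logb 2 c
      = a * Real.logb 2 (a / c) - a * Real.logb 2 b := by
  rcases ha.eq_or_lt with h | h
  · simp [← h]
  · have hb0 : (0:ℝ) < b := lt_of_lt_of_le h hb
    have hc0 : (0:ℝ) < c := lt_of_lt_of_le h hc
    rw [Real.logb_div h.ne' hb0.ne', Real.logb_div h.ne' hc0.ne']
    ring

/-- **Example 3, information quantities:** for the degraded binary BC
`Y₁ = S₁·X`, `Y₂ = S₂·X` with states distributed as `PS12 q γ` independent of
`(U, X)`: (i) `I(X;Y₁|U,S₁) = q·H(X|U)` and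
(ii) `I(U;Y₂|S₂) = γq·(H(X) − H(X|U))`. -/
theorem stmt_13 {U : Type} [Fintype U]
    (q γ : ℝ) (hq0 : 0 < q) (hq1 : q < 1) (hγ0 : 0 < γ) (hγ1 : γ < 1)
    (PUX : U → Fin 2 → ℝ) (h0 : ∀ u x, 0 ≤ PUX u x)
    (h1 : ∑ u, ∑ x, PUX u x = 1) :
    -- (i)  I(X;Y₁|U,S₁) = H(X|U,S₁) − H(X|Y₁,U,S₁) = q · H(X|U)
    (condEnt (fun (x : Fin 2) (us : U × Fin 2) => PUX us.1 x * PS1 q γ us.2)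
      - condEnt (fun (x : Fin 2) (yus : Fin 2 × U × Fin 2) =>
          PUX yus.2.1 x * PS1 q γ yus.2.2 *
            (if yus.1 = yus.2.2 * x then (1:ℝ) else 0))
      = q * condEnt (fun (x : Fin 2) (u : U) => PUX u x))
    ∧
    -- (ii)  I(U;Y₂|S₂) = H(U|S₂) − H(U|Y₂,S₂) = γq · (H(X) − H(X|U))
    (condEnt (fun (u : U) (s₂ : Fin 2) => (∑ x, PUX u x) * PS2 q γ s₂)
      - condEnt (fun (u : U) (ys : Fin 2 × Fin 2) =>
          PS2 q γ ys.2 * ∑ x, PUX u x * (if ys.1 = ys.2 * x then (1:ℝ) else 0))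
      = γ * q * ((- ∑ x, (∑ u, PUX u x) * Real.logb 2 (∑ u, PUX u x))
          - condEnt (fun (x : Fin 2) (u : U) => PUX u x))) := by
  have hPS1_0 : PS1 q γ 0 = 1 - q := by simp [PS1, PS12, Fin.sum_univ_two]
  have hPS1_1 : PS1 q γ 1 = q := by simp [PS1, PS12, Fin.sum_univ_two]; ring
  have hPS2_0 : PS2 q γ 0 = 1 - q * γ := by simp [PS2, PS12, Fin.sum_univ_two]; ring
  have hPS2_1 : PS2 q γ 1 = q * γ := by simp [PS2, PS12, Fin.sum_univ_two]
  have hq1' : (1:ℝ) - q ≠ 0 := by intro h; linarith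
  have hqne : q ≠ 0 := ne_of_gt hq0
  have hc1 : q * γ ≠ 0 := by positivity
  have hc0 : (1:ℝ) - q * γ ≠ 0 := by nlinarith
  -- the inner rescaling identity over `Fin 2`
  have inner : ∀ (g : Fin 2 → ℝ) (c : ℝ), c ≠ 0 →
      (∑ x, (g x * c) * Real.logb 2 ((g x * c) / ∑ x', g x' * c))
       = c * ∑ x, g x * Real.logb 2 (g x / ∑ x', g x') := by
    intro g c hc
    have hden : (∑ x', g x' * c) = (∑ x', g x') * c := (Finset.sum_mul ..).symm
    rw [hden, Finset.mul_sum]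
    exact Finset.sum_congr rfl fun x _ => aux_scale _ _ _ hc
  ------------------------------------------------------------------
  -- part (i)
  ------------------------------------------------------------------
  have e_i1 : condEnt (fun (x : Fin 2) (us : U × Fin 2) => PUX us.1 x * PS1 q γ us.2)
      = - ∑ u, ∑ x, PUX u x * Real.logb 2 (PUX u x / ∑ x', PUX u x') := by
    simp only [condEnt, Fintype.sum_prod_type]
    congr 1
    refine Finset.sum_congr rfl fun u _ => ?_
    rw [Fin.sum_univ_two,
        inner (PUX u) (PS1 q γ 0) (by rw [hPS1_0]; exact hq1'),
        inner (PUX u) (PS1 q γ 1) (by rw [hPS1_1]; exact hqne),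
        hPS1_0, hPS1_1]
    ring
  have e_i2 : condEnt (fun (x : Fin 2) (yus : Fin 2 × U × Fin 2) =>
          PUX yus.2.1 x * PS1 q γ yus.2.2 *
            (if yus.1 = yus.2.2 * x then (1:ℝ) else 0))
      = -((1-q) * ∑ u, ∑ x, PUX u x * Real.logb 2 (PUX u x / ∑ x', PUX u x')) := by
    simp only [condEnt, Fintype.sum_prod_type, Fin.sum_univ_two, hPS1_0, hPS1_1]
    norm_num
    simp only [aux_self, add_zero, Finset.sum_const_zero, neg_zero, zero_add]
    rw [Finset.mul_sum]
    exact congrArg Neg.neg (Finset.sum_congr rfl fun u _ => aux_pair _ _ _ hq1')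
  have part1 : condEnt (fun (x : Fin 2) (us : U × Fin 2) => PUX us.1 x * PS1 q γ us.2)
      - condEnt (fun (x : Fin 2) (yus : Fin 2 × U × Fin 2) =>
          PUX yus.2.1 x * PS1 q γ yus.2.2 *
            (if yus.1 = yus.2.2 * x then (1:ℝ) else 0))
      = q * condEnt (fun (x : Fin 2) (u : U) => PUX u x) := by
    rw [e_i1, e_i2]
    simp only [condEnt]
    ring
  ------------------------------------------------------------------
  -- part (ii)
  ------------------------------------------------------------------
  have hsum1 : ∑ u, (PUX u 0 + PUX u 1) = 1 := by
    simpa [Fin.sum_univ_two] using h1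
  have e_ii1 : condEnt (fun (u : U) (s₂ : Fin 2) => (∑ x, PUX u x) * PS2 q γ s₂)
      = - ∑ u, (PUX u 0 + PUX u 1) * Real.logb 2 (PUX u 0 + PUX u 1) := by
    have hne : ∀ s : Fin 2, PS2 q γ s ≠ 0 := by
      intro s
      fin_cases s
      · show PS2 q γ 0 ≠ 0
        rw [hPS2_0]; exact hc0
      · show PS2 q γ 1 ≠ 0
        rw [hPS2_1]; exact hc1
    have hden : ∀ s, (∑ u', (∑ x, PUX u' x) * PS2 q γ s) = PS2 q γ s := by
      intro s; rw [← Finset.sum_mul, h1, one_mul]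
    have step : ∀ s : Fin 2,
        (∑ u, (∑ x, PUX u x) * PS2 q γ s *
          Real.logb 2 ((∑ x, PUX u x) * PS2 q γ s / ∑ u', (∑ x, PUX u' x) * PS2 q γ s))
        = PS2 q γ s * ∑ u, (∑ x, PUX u x) * Real.logb 2 (∑ x, PUX u x) := by
      intro s
      rw [hden, Finset.mul_sum]
      exact Finset.sum_congr rfl fun u _ => aux_scale1 _ _ (hne s)
    have key : (∑ s : Fin 2, ∑ u, (∑ x, PUX u x) * PS2 q γ s *
          Real.logb 2 ((∑ x, PUX u x) * PS2 q γ s / ∑ u', (∑ x, PUX u' x) * PS2 q γ s))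
        = ∑ u, (∑ x, PUX u x) * Real.logb 2 (∑ x, PUX u x) := by
      rw [Finset.sum_congr rfl fun s _ => step s, Fin.sum_univ_two, hPS2_0, hPS2_1]
      ring
    simp only [condEnt]
    rw [key]
    simp [Fin.sum_univ_two]
  have e_ii2 : condEnt (fun (u : U) (ys : Fin 2 × Fin 2) =>
          PS2 q γ ys.2 * ∑ x, PUX u x * (if ys.1 = ys.2 * x then (1:ℝ) else 0))
      = -((1 - q*γ) * ∑ u, (PUX u 0 + PUX u 1) * Real.logb 2 (PUX u 0 + PUX u 1)
          + q*γ * ∑ u, (PUX u 0 * Real.logb 2 (PUX u 0 / ∑ u', PUX u' 0)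
              + PUX u 1 * Real.logb 2 (PUX u 1 / ∑ u', PUX u' 1))) := by
    have s1 : ∀ i : Fin 2, (∑ u, q * γ * PUX u i *
          Real.logb 2 (q * γ * PUX u i / ∑ u', q * γ * PUX u' i))
        = q * γ * ∑ u, PUX u i * Real.logb 2 (PUX u i / ∑ u', PUX u' i) := by
      intro i
      rw [Finset.mul_sum]
      refine Finset.sum_congr rfl fun u _ => ?_
      rw [show (∑ u', q * γ * PUX u' i) = q * γ * ∑ u', PUX u' i from by
        rw [Finset.mul_sum]]
      exact aux_scale' _ _ _ hc1
    have s3 : (∑ u, (1 - q * γ) * (PUX u 0 + PUX u 1) *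
          Real.logb 2 ((1 - q * γ) * (PUX u 0 + PUX u 1) /
            ∑ u', (1 - q * γ) * (PUX u' 0 + PUX u' 1)))
        = (1 - q * γ) * ∑ u, (PUX u 0 + PUX u 1) * Real.logb 2 (PUX u 0 + PUX u 1) := by
      have hd : (∑ u', (1 - q * γ) * (PUX u' 0 + PUX u' 1)) = 1 - q * γ := by
        rw [← Finset.mul_sum, hsum1, mul_one]
      rw [Finset.mul_sum]
      refine Finset.sum_congr rfl fun u _ => ?_
      rw [hd]
      exact aux_scale1' _ _ hc0
    simp only [condEnt, Fintype.sum_prod_type, Fin.sum_univ_two, hPS2_0, hPS2_1]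
    norm_num
    rw [s1 0, s1 1, s3, Finset.sum_add_distrib]
    ring
  -- symmetry of mutual information (Claim A)
  have hA : (∑ u, (PUX u 0 * Real.logb 2 (PUX u 0 / ∑ u', PUX u' 0)
              + PUX u 1 * Real.logb 2 (PUX u 1 / ∑ u', PUX u' 1)))
        - ∑ u, (PUX u 0 + PUX u 1) * Real.logb 2 (PUX u 0 + PUX u 1)
      = (∑ u, (PUX u 0 * Real.logb 2 (PUX u 0 / (PUX u 0 + PUX u 1))
              + PUX u 1 * Real.logb 2 (PUX u 1 / (PUX u 0 + PUX u 1))))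
        - ((∑ u', PUX u' 0) * Real.logb 2 (∑ u', PUX u' 0)
            + (∑ u', PUX u' 1) * Real.logb 2 (∑ u', PUX u' 1)) := by
    have hx0 : (∑ u', PUX u' 0) * Real.logb 2 (∑ u', PUX u' 0)
        = ∑ u, PUX u 0 * Real.logb 2 (∑ u', PUX u' 0) := Finset.sum_mul ..
    have hx1 : (∑ u', PUX u' 1) * Real.logb 2 (∑ u', PUX u' 1)
        = ∑ u, PUX u 1 * Real.logb 2 (∑ u', PUX u' 1) := Finset.sum_mul ..
    rw [hx0, hx1, ← Finset.sum_sub_distrib, ← Finset.sum_add_distrib,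
        ← Finset.sum_sub_distrib]
    refine Finset.sum_congr rfl fun u _ => ?_
    have h00 : PUX u 0 ≤ ∑ u', PUX u' 0 :=
      Finset.single_le_sum (fun i _ => h0 i 0) (Finset.mem_univ u)
    have h11 : PUX u 1 ≤ ∑ u', PUX u' 1 :=
      Finset.single_le_sum (fun i _ => h0 i 1) (Finset.mem_univ u)
    have hab0 : PUX u 0 ≤ PUX u 0 + PUX u 1 := le_add_of_nonneg_right (h0 u 1)
    have hab1 : PUX u 1 ≤ PUX u 0 + PUX u 1 := le_add_of_nonneg_left (h0 u 0)
    linear_combination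
      aux_sym (PUX u 0) (∑ u', PUX u' 0) (PUX u 0 + PUX u 1) (h0 u 0) h00 hab0
      + aux_sym (PUX u 1) (∑ u', PUX u' 1) (PUX u 0 + PUX u 1) (h0 u 1) h11 hab1
  refine ⟨part1, ?_⟩
  rw [e_ii1, e_ii2]
  simp only [condEnt, Fin.sum_univ_two]
  linear_combination q * γ * hA
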